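/- Let λ be a positive integer. Define, for functions f₀, f₁ : Fin (2^λ) → Fin (2^(3*λ)), the decryption function Dec_{f₀,f₁} (x, y) = some false if f₀ x = y, else some true if f₁ x = y, else none. If f₀ and f₁ are drawn independently and uniformly at random from all functions Fin (2^λ) → Fin (2^(3*λ)), then for every bit b : Bool and every x : Fin (2^λ), the probability that decryption of the honest ciphertext fails is at most 2^{-λ}: Pr[Dec_{f₀,f₁} (x, (if b then f₁ else f₀) x) ≠ some b] ≤ 1 / 2^λ. -/

import Mathlib

/-!
Decryption of `(x, f_b x)` can only fail when `b = 1`, and then only because `f₀ x = f₁ x`.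
Overwriting `f₁` at `x` by `f₀ x` identifies all pairs with the colliding pairs times the range,
so a collision at `x` has probability `2^{-3λ} ≤ 2^{-λ}`.
-/

open scoped ENNReal

variable {α β : Type*}

def decrypt [DecidableEq β] (f₀ f₁ : α → β) (c : α × β) : Option Bool :=
  if f₀ c.1 = c.2 then some false else if f₁ c.1 = c.2 then some true else none

theorem decrypt_ne_some_iff [DecidableEq β] (f₀ f₁ : α → β) (b : Bool) (x : α) :
    decrypt f₀ f₁ (x, (if b then f₁ else f₀) x) ≠ some b ↔ b = true ∧ f₀ x = f₁ x := by
  cases b <;> by_cases h : f₀ x = f₁ x <;> simp [decrypt, h]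

def collisionAtEquiv [DecidableEq α] (x : α) :
    (α → β) × (α → β) ≃ {p : (α → β) × (α → β) | p.1 x = p.2 x} × β where
  toFun p := (⟨(p.1, Function.update p.2 x (p.1 x)), by simp⟩, p.2 x)
  invFun q := (q.1.1.1, Function.update q.1.1.2 x q.2)
  left_inv p := by simp
  right_inv := by
    rintro ⟨⟨⟨f, g⟩, hfg : f x = g x⟩, c⟩
    simp [hfg]

theorem toOuterMeasure_uniformOfFintype_fst_apply_eq_snd_apply [Fintype α] [DecidableEq α]
    [Fintype β] [Nonempty β] (x : α) :
    (PMF.uniformOfFintype ((α → β) × (α → β))).toOuterMeasure {p | p.1 x = p.2 x} =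
      (Fintype.card β : ℝ≥0∞)⁻¹ := by
  classical
  rw [PMF.toOuterMeasure_uniformOfFintype_apply]
  refine ((ENNReal.eq_div_iff (by simp) (ENNReal.natCast_ne_top _)).2 ?_).symm
  rw [Fintype.card_congr (collisionAtEquiv x), Fintype.card_prod, Nat.cast_mul, mul_assoc,
    ENNReal.mul_inv_cancel (by simp) (by simp), mul_one]

theorem toOuterMeasure_decrypt_ne_some_le [Fintype α] [DecidableEq α] [Fintype β]
    [DecidableEq β] [Nonempty β] (b : Bool) (x : α) :
    (PMF.uniformOfFintype ((α → β) × (α → β))).toOuterMeasure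
        {p | decrypt p.1 p.2 (x, (if b then p.2 else p.1) x) ≠ some b} ≤
      (Fintype.card β : ℝ≥0∞)⁻¹ :=
  toOuterMeasure_uniformOfFintype_fst_apply_eq_snd_apply (β := β) x ▸
    MeasureTheory.measure_mono fun p hp => ((decrypt_ne_some_iff p.1 p.2 b x).1 hp).2

theorem stmt_3_general (lam : ℕ) (b : Bool) (x : Fin (2 ^ lam)) :
    (PMF.uniformOfFintype
        ((Fin (2 ^ lam) → Fin (2 ^ (3 * lam))) ×
          (Fin (2 ^ lam) → Fin (2 ^ (3 * lam))))).toOuterMeasure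
      {p | (fun xy : Fin (2 ^ lam) × Fin (2 ^ (3 * lam)) =>
              if p.1 xy.1 = xy.2 then some false
              else if p.2 xy.1 = xy.2 then some true
              else none)
            (x, (if b then p.2 else p.1) x) ≠ some b} ≤ 1 / 2 ^ lam := by
  refine (toOuterMeasure_decrypt_ne_some_le b x).trans ?_
  rw [Fintype.card_fin, Nat.cast_pow, Nat.cast_ofNat, one_div]
  gcongr
  · norm_num
  · omega

/-- Idealized correctness: for independent uniformly random functions
`f₀, f₁ : Fin (2^λ) → Fin (2^(3λ))`, for every bit `b` and input `x`, the
probability that decryption of the honest ciphertext `(x, f_b x)` fails is at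
most `2^{-λ}`. -/
theorem stmt_3 (lam : ℕ) (hlam : 0 < lam) (b : Bool) (x : Fin (2 ^ lam)) :
    (PMF.uniformOfFintype
        ((Fin (2 ^ lam) → Fin (2 ^ (3 * lam))) ×
          (Fin (2 ^ lam) → Fin (2 ^ (3 * lam))))).toOuterMeasure
      {p | (fun xy : Fin (2 ^ lam) × Fin (2 ^ (3 * lam)) =>
              if p.1 xy.1 = xy.2 then some false
              else if p.2 xy.1 = xy.2 then some true
              else none)
            (x, (if b then p.2 else p.1) x) ≠ some b} ≤ 1 / 2 ^ lam :=
  stmt_3_general lam b x
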